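/- Let (f_l)_{l∈ℕ} be a sequence of slice functions Ω_D → ℍ converging pointwise on Ω_D to a function f : Ω_D → ℍ. Then f is a slice function. -/

import Mathlib

noncomputable section

abbrev ℍ := Quaternion ℝ

/-- The sphere of quaternionic imaginary units. -/
def Sph : Set ℍ := {J | J ^ 2 = -1}

/-- The complex slice `ℂ_J = {a + b J : a b : ℝ}`. -/
def CJ (J : ℍ) : Set ℍ := {x | ∃ a b : ℝ, x = (a : ℍ) + (b : ℍ) * J}

variable {n : ℕ}

/-- Conjugation of the `h`-th complex coordinate. -/
def conjCoord (h : Fin n) (z : Fin n → ℂ) : Fin n → ℂ :=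
  Function.update z h (starRingEnd ℂ (z h))

/-- Quaternionic conjugation of the coordinates with index in `H`. -/
def conjQ (H : Finset (Fin n)) (x : Fin n → ℍ) : Fin n → ℍ :=
  fun h => if h ∈ H then star (x h) else x h

/-- Ordered product `J_K` of the values of `J` over `K`, in increasing index order. -/
def JK (J : Fin n → ℍ) (K : Finset (Fin n)) : ℍ :=
  ((K.sort (· ≤ ·)).map J).prod

/-- The complex point with coordinates `α h + i β h`. -/
def zOf (α β : Fin n → ℝ) : Fin n → ℂ :=
  fun h => (α h : ℂ) + (β h : ℂ) * Complex.I

/-- The quaternionic point with coordinates `α h + β h * J h`. -/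
def ptOf (α β : Fin n → ℝ) (J : Fin n → ℍ) : Fin n → ℍ :=
  fun h => (α h : ℍ) + (β h : ℍ) * J h

/-- The circularization `Ω_D` of `D ⊆ ℂⁿ` in `ℍⁿ`. -/
def OmegaD (D : Set (Fin n → ℂ)) : Set (Fin n → ℍ) :=
  {x | ∃ α β : Fin n → ℝ, ∃ J : Fin n → ℍ,
    (∀ h, J h ∈ Sph) ∧ x = ptOf α β J ∧ zOf α β ∈ D}

/-- Invariance of `D` under all coordinatewise complex conjugations. -/
def ConjInv (D : Set (Fin n → ℂ)) : Prop :=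
  ∀ h : Fin n, ∀ z ∈ D, conjCoord h z ∈ D

/-- Stem function condition for a family `F = (F_K)`. -/
def IsStem (D : Set (Fin n → ℂ)) (F : Finset (Fin n) → (Fin n → ℂ) → ℍ) : Prop :=
  ∀ (K : Finset (Fin n)) (h : Fin n), ∀ z ∈ D,
    F K (conjCoord h z) = (if h ∈ K then -1 else 1) * F K z

/-- `f` is the slice function induced by the stem function `F` on `Ω_D`. -/
def Induces (D : Set (Fin n → ℂ)) (F : Finset (Fin n) → (Fin n → ℂ) → ℍ)
    (f : (Fin n → ℍ) → ℍ) : Prop :=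
  ∀ (α β : Fin n → ℝ) (J : Fin n → ℍ), (∀ h, J h ∈ Sph) → zOf α β ∈ D →
    f (ptOf α β J) = ∑ K : Finset (Fin n), JK J K * F K (zOf α β)

/-- `f` is a slice function on `Ω_D`. -/
def IsSlice (D : Set (Fin n → ℂ)) (f : (Fin n → ℍ) → ℍ) : Prop :=
  ∃ F, IsStem D F ∧ Induces D F f

/-- Each component of the stem function is of class `C¹` on `D`. -/
def StemC1 (D : Set (Fin n → ℂ)) (F : Finset (Fin n) → (Fin n → ℂ) → ℍ) : Prop :=
  ∀ K, ContDiffOn ℝ 1 (F K) D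

/-- Holomorphy (Cauchy–Riemann system) of a stem function. -/
def StemHolo (D : Set (Fin n → ℂ)) (F : Finset (Fin n) → (Fin n → ℂ) → ℍ) : Prop :=
  ∀ z ∈ D, ∀ h : Fin n, ∀ K : Finset (Fin n), h ∉ K →
    fderiv ℝ (F K) z (Pi.single h 1) =
      fderiv ℝ (F (insert h K)) z (Pi.single h Complex.I) ∧
    fderiv ℝ (F K) z (Pi.single h Complex.I) =
      -fderiv ℝ (F (insert h K)) z (Pi.single h 1)

/-- `f` is a slice regular function on `Ω_D`. -/
def IsSliceRegular (D : Set (Fin n → ℂ)) (f : (Fin n → ℍ) → ℍ) : Prop :=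
  ∃ F, IsStem D F ∧ StemC1 D F ∧ StemHolo D F ∧ Induces D F f

/-- Pointwise product of stem functions associated with `σ`. -/
def SP (σ : Finset (Fin n) → Finset (Fin n) → ℝ)
    (F G : Finset (Fin n) → (Fin n → ℂ) → ℍ) :
    Finset (Fin n) → (Fin n → ℂ) → ℍ :=
  fun K z => ∑ H : Finset (Fin n), ∑ L : Finset (Fin n),
    if symmDiff H L = K then σ H L • (F H z * G L z) else 0

/-- The tensor-product sign function `σ_⊗(K,H) = (-1)^{|K∩H|}`. -/
def sigmaT : Finset (Fin n) → Finset (Fin n) → ℝ :=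
  fun K H => (-1 : ℝ) ^ (K ∩ H).card

/-- The tensor (slice) product of stem functions. -/
def SPT (F G : Finset (Fin n) → (Fin n → ℂ) → ℍ) :
    Finset (Fin n) → (Fin n → ℂ) → ℍ := SP sigmaT F G

/-- The stem function `∂_h F`. -/
def Dplus (F : Finset (Fin n) → (Fin n → ℂ) → ℍ) (h : Fin n) :
    Finset (Fin n) → (Fin n → ℂ) → ℍ :=
  fun K z => (2 : ℝ)⁻¹ • (fderiv ℝ (F K) z (Pi.single h 1) +
    ((-1 : ℝ) ^ (K ∩ {h}).card) •
      fderiv ℝ (F (symmDiff K {h})) z (Pi.single h Complex.I))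

/-- The stem function `∂̄_h F`. -/
def Dminus (F : Finset (Fin n) → (Fin n → ℂ) → ℍ) (h : Fin n) :
    Finset (Fin n) → (Fin n → ℂ) → ℍ :=
  fun K z => (2 : ℝ)⁻¹ • (fderiv ℝ (F K) z (Pi.single h 1) -
    ((-1 : ℝ) ^ (K ∩ {h}).card) •
      fderiv ℝ (F (symmDiff K {h})) z (Pi.single h Complex.I))

/-- The ordered monomial function `x ↦ x^ℓ a = x₁^{ℓ₁} ⋯ xₙ^{ℓₙ} a`. -/
def mono (ℓ : Fin n → ℕ) (a : ℍ) (x : Fin n → ℍ) : ℍ :=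
  (List.ofFn fun h => x h ^ ℓ h).prod * a

/-- The coordinatewise map `φ_J : ℂⁿ → (ℂ_J)ⁿ ⊆ ℍⁿ`. -/
def phiJ (J : ℍ) (z : Fin n → ℂ) : Fin n → ℍ :=
  fun h => ((z h).re : ℍ) + ((z h).im : ℍ) * J

/-- The standard basis vector `e_K` of `ℝ^{𝒫(n)}`. -/
def eB (K : Finset (Fin n)) : Finset (Fin n) → ℝ := Pi.single K 1

/-- The `Δ`-product on `ℝ^{𝒫(n)}` associated with `σ`. -/
def deltaMulR (σ : Finset (Fin n) → Finset (Fin n) → ℝ)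
    (v w : Finset (Fin n) → ℝ) : Finset (Fin n) → ℝ :=
  fun K => ∑ H : Finset (Fin n), ∑ L : Finset (Fin n),
    if symmDiff H L = K then σ H L * v H * w L else 0


/-!
A slice function determines its stem function linearly. Evaluating `f` at the `2ⁿ` points
`x_H = (α₁ ± iβ₁, …, αₙ ± iβₙ)`, with the sign `-` exactly at the indices in `H`, gives
`f(x_H) = ∑_K (-1)^{|K ∩ H|} i^{|K|} F_K(z)`, and the orthogonality of the characters
`H ↦ (-1)^{|K ∩ H|}` of `𝒫(n)` inverts this to
`F_K(z) = 2⁻ⁿ i^{-|K|} ∑_H (-1)^{|K ∩ H|} f(x_H)`.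
So the stem functions of the `f_l` converge pointwise on `D`, and both the stem identities and
the representation formula pass to the limit.
-/

open Finset Filter Topology

lemma prod_ite_mem_neg_one {ι R : Type*} [DecidableEq ι] [CommRing R] (s t : Finset ι) :
    ∏ i ∈ s, (if i ∈ t then (-1 : R) else 1) = (-1) ^ (s ∩ t).card := by
  rw [prod_ite_mem, prod_const]

lemma sum_neg_one_pow_card_inter_mul {ι R : Type*} [Fintype ι] [DecidableEq ι] [CommRing R]
    (K K' : Finset ι) :
    ∑ H : Finset ι, (-1 : R) ^ (K ∩ H).card * (-1) ^ (K' ∩ H).card =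
      if K = K' then 2 ^ Fintype.card ι else 0 := by
  have hsign (S H : Finset ι) : (-1 : R) ^ (S ∩ H).card = ∏ i ∈ H, if i ∈ S then -1 else 1 := by
    rw [prod_ite_mem_neg_one, inter_comm]
  simp_rw [hsign, ← prod_mul_distrib, ← powerset_univ, ← prod_one_add]
  split_ifs with hK
  · subst hK
    simp [apply_ite (fun x : R => x * x), one_add_one_eq_two]
  · obtain ⟨i, hi⟩ : ∃ i, ¬(i ∈ K ↔ i ∈ K') := by
      by_contra! h
      exact hK (Finset.ext h)
    refine prod_eq_zero (mem_univ i) ?_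
    by_cases h : i ∈ K <;> simp_all

lemma list_prod_map_sort {α M : Type*} [LinearOrder α] [CommMonoid M] (s : Finset α)
    (f : α → M) : ((s.sort (· ≤ ·)).map f).prod = ∏ a ∈ s, f a := by
  rw [← prod_map_toList]
  exact ((sort_perm_toList ..).map f).prod_eq

lemma list_prod_map_smul {α : Type*} (l : List α) (c : α → ℝ) (q : ℍ) :
    (l.map fun a => c a • q).prod = (l.map c).prod • q ^ l.length := by
  induction l with
  | nil => simp
  | cons a l ih =>
    rw [List.map_cons, List.prod_cons, ih, smul_mul_smul, ← pow_succ']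
    simp

def quatI : ℍ := ⟨0, 1, 0, 0⟩

lemma quatI_mem_Sph : quatI ∈ Sph := by
  show quatI ^ 2 = -1
  ext <;> simp only [sq, Quaternion.re_mul, Quaternion.imI_mul, Quaternion.imJ_mul,
    Quaternion.imK_mul] <;> simp [quatI, Quaternion.re_one, Quaternion.imI_one,
    Quaternion.imJ_one, Quaternion.imK_one]

lemma quatI_ne_zero : quatI ≠ 0 := fun h => by
  simpa [quatI, Quaternion.imI_zero] using congrArg QuaternionAlgebra.imI h

def signedUnits (J : ℍ) (H : Finset (Fin n)) : Fin n → ℍ :=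
  fun h => (if h ∈ H then -1 else 1 : ℝ) • J

lemma signedUnits_mem_Sph {J : ℍ} (hJ : J ∈ Sph) (H : Finset (Fin n)) (h : Fin n) :
    signedUnits J H h ∈ Sph := by
  by_cases hh : h ∈ H <;> simpa [Sph, signedUnits, hh] using hJ

lemma JK_signedUnits (J : ℍ) (H K : Finset (Fin n)) :
    JK (signedUnits J H) K = (-1 : ℝ) ^ (K ∩ H).card • J ^ K.card := by
  unfold JK signedUnits
  rw [list_prod_map_smul, list_prod_map_sort, prod_ite_mem_neg_one,
    length_sort]

lemma zOf_re_im (z : Fin n → ℂ) : zOf (fun h => (z h).re) (fun h => (z h).im) = z := by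
  funext h
  simp [zOf, Complex.re_add_im]

def stemOf (f : (Fin n → ℍ) → ℍ) (K : Finset (Fin n)) (z : Fin n → ℂ) : ℍ :=
  ((2 : ℝ) ^ n)⁻¹ • ((quatI ^ K.card)⁻¹ * ∑ H : Finset (Fin n), (-1 : ℝ) ^ (K ∩ H).card •
    f (ptOf (fun h => (z h).re) (fun h => (z h).im) (signedUnits quatI H)))

lemma stemOf_eq_of_induces {D : Set (Fin n → ℂ)} {F : Finset (Fin n) → (Fin n → ℂ) → ℍ}
    {f : (Fin n → ℍ) → ℍ} (hF : Induces D F f) {z : Fin n → ℂ} (hz : z ∈ D)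
    (K : Finset (Fin n)) : stemOf f K z = F K z := by
  set v : Finset (Fin n) → ℍ := fun K' => quatI ^ K'.card * F K' z
  have hval (H : Finset (Fin n)) :
      f (ptOf (fun h => (z h).re) (fun h => (z h).im) (signedUnits quatI H)) =
        ∑ K', (-1 : ℝ) ^ (K' ∩ H).card • v K' := by
    rw [hF _ _ _ (signedUnits_mem_Sph quatI_mem_Sph H) (by rwa [zOf_re_im]), zOf_re_im]
    simp_rw [v, JK_signedUnits, smul_mul_assoc]
  have hsum : ∑ H : Finset (Fin n), (-1 : ℝ) ^ (K ∩ H).card •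
      f (ptOf (fun h => (z h).re) (fun h => (z h).im) (signedUnits quatI H)) =
        (2 : ℝ) ^ n • v K := by
    calc _ = ∑ K', (∑ H : Finset (Fin n), (-1 : ℝ) ^ (K ∩ H).card * (-1) ^ (K' ∩ H).card) •
          v K' := by
          simp_rw [hval, smul_sum, smul_smul, sum_smul]
          exact sum_comm
      _ = (2 : ℝ) ^ n • v K := by
          simp [sum_neg_one_pow_card_inter_mul]
  rw [stemOf, hsum, mul_smul_comm, smul_smul, inv_mul_cancel₀ (by positivity), one_smul,
    inv_mul_cancel_left₀ (pow_ne_zero _ quatI_ne_zero)]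

lemma tendsto_stemOf {D : Set (Fin n → ℂ)} {ι : Type*} {L : Filter ι}
    {fs : ι → (Fin n → ℍ) → ℍ} {f : (Fin n → ℍ) → ℍ}
    (hlim : ∀ x ∈ OmegaD D, Tendsto (fun i => fs i x) L (𝓝 (f x)))
    {z : Fin n → ℂ} (hz : z ∈ D) (K : Finset (Fin n)) :
    Tendsto (fun i => stemOf (fs i) K z) L (𝓝 (stemOf f K z)) := by
  refine ((tendsto_finsetSum _ fun H _ => (hlim _ ?_).const_smul _).const_mul _).const_smul _
  exact ⟨_, _, _, signedUnits_mem_Sph quatI_mem_Sph H, rfl, by rwa [zOf_re_im]⟩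

lemma isStem_of_tendsto {D : Set (Fin n → ℂ)} (hD : ConjInv D) {ι : Type*} {L : Filter ι}
    [L.NeBot] {Fs : ι → Finset (Fin n) → (Fin n → ℂ) → ℍ} {F : Finset (Fin n) → (Fin n → ℂ) → ℍ}
    (hFs : ∀ i, IsStem D (Fs i))
    (hlim : ∀ K, ∀ z ∈ D, Tendsto (fun i => Fs i K z) L (𝓝 (F K z))) : IsStem D F := by
  intro K h z hz
  refine tendsto_nhds_unique (hlim K _ (hD h z hz)) ?_
  simpa only [hFs _ K h z hz] using (hlim K z hz).const_mul _

lemma induces_of_tendsto {D : Set (Fin n → ℂ)} {ι : Type*} {L : Filter ι} [L.NeBot]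
    {Fs : ι → Finset (Fin n) → (Fin n → ℂ) → ℍ} {F : Finset (Fin n) → (Fin n → ℂ) → ℍ}
    {fs : ι → (Fin n → ℍ) → ℍ} {f : (Fin n → ℍ) → ℍ} (hFs : ∀ i, Induces D (Fs i) (fs i))
    (hlimF : ∀ K, ∀ z ∈ D, Tendsto (fun i => Fs i K z) L (𝓝 (F K z)))
    (hlimf : ∀ x ∈ OmegaD D, Tendsto (fun i => fs i x) L (𝓝 (f x))) : Induces D F f := by
  intro α β J hJ hz
  refine tendsto_nhds_unique (hlimf _ ⟨α, β, J, hJ, rfl, hz⟩) ?_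
  simpa only [hFs _ α β J hJ hz] using tendsto_finsetSum _ fun K _ => (hlimF K _ hz).const_mul _

theorem stmt4_general (n : ℕ) (D : Set (Fin n → ℂ))
    (hinv : ConjInv D) (fl : ℕ → (Fin n → ℍ) → ℍ) (f : (Fin n → ℍ) → ℍ)
    (hsl : ∀ l, IsSlice D (fl l))
    (hconv : ∀ x ∈ OmegaD D,
      Filter.Tendsto (fun l => fl l x) Filter.atTop (nhds (f x))) :
    IsSlice D f := by
  choose F hstem hind using hsl
  have hlim : ∀ K, ∀ z ∈ D, Tendsto (fun l => F l K z) atTop (𝓝 (stemOf f K z)) :=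
    fun K z hz => by
      simpa only [stemOf_eq_of_induces (hind _) hz] using tendsto_stemOf hconv hz K
  exact ⟨stemOf f, isStem_of_tendsto hinv hstem hlim, induces_of_tendsto hind hlim hconv⟩

/-- **Pointwise limits of slice functions are slice.** -/
theorem stmt4 (n : ℕ) (hn : 0 < n) (D : Set (Fin n → ℂ)) (hne : D.Nonempty)
    (hinv : ConjInv D) (fl : ℕ → (Fin n → ℍ) → ℍ) (f : (Fin n → ℍ) → ℍ)
    (hsl : ∀ l, IsSlice D (fl l))
    (hconv : ∀ x ∈ OmegaD D,
      Filter.Tendsto (fun l => fl l x) Filter.atTop (nhds (f x))) :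
    IsSlice D f :=
  stmt4_general n D hinv fl f hsl hconv
end
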